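/- arXiv:1907.00800 — 3 statements merged into one kernel-verified Lean document; each statement's English description precedes it below -/
import Mathlib

section
/- Weighted argument principle: let f be meromorphic and not identically zero on a neighborhood of the closed disc B̄(s₀, u), with no zeros or poles on the boundary circle. Then (1/(2πi)) ∮_{∂B(s₀,u)} (s - s₀) · f'(s)/f(s) ds = Σ_ρ ord_ρ(f) · (ρ - s₀), where the sum runs over zeros and poles ρ of f inside the disc, ord_ρ(f) being the order of the zero (positive) or pole (negative) at ρ. -/
/-!
Divide out the zeros and poles: `f = G · ∏ (s - ρ) ^ ord ρ` with `G` holomorphic on `U` and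
zero-free on the closed disc. On the circle `f'/f = G'/G + ∑ ord ρ / (s - ρ)`, and since
`(s - s₀) / (s - ρ) = 1 + (ρ - s₀) / (s - ρ)` the integrand is a function holomorphic on the disc
plus `∑ ord ρ (ρ - s₀) / (s - ρ)`. Cauchy's theorem removes the first part, and each simple pole
contributes `2πi · ord ρ (ρ - s₀)`.
-/

open Complex Metric Set Filter Topology Real

section Factorization

variable {𝕜 : Type*} [NontriviallyNormedField 𝕜]

theorem analyticAt_sub_zpow {ρ z : 𝕜} (hz : z ≠ ρ) (n : ℤ) :
    AnalyticAt 𝕜 (fun w ↦ (w - ρ) ^ n) z :=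
  (analyticAt_id.sub analyticAt_const).fun_zpow (sub_ne_zero.2 hz)

theorem meromorphicOrderAt_prod_sub_zpow {Z : Finset 𝕜} (n : 𝕜 → ℤ) {ρ : 𝕜} (hρ : ρ ∈ Z) :
    meromorphicOrderAt (fun z ↦ ∏ σ ∈ Z, (z - σ) ^ n σ) ρ = n ρ := by
  rw [meromorphicOrderAt_fun_prod fun σ _ ↦ by fun_prop, Finset.sum_eq_single ρ]
  · exact fun_meromorphicOrderAt_zpow_id_sub_const
  · intro σ _ hσρ
    exact (analyticAt_sub_zpow hσρ.symm _).meromorphicNFAt.meromorphicOrderAt_eq_zero_iff.2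
      (zpow_ne_zero _ (sub_ne_zero.2 hσρ.symm))
  · exact fun h ↦ (h hρ).elim

theorem analyticAt_prod_sub_zpow (Z : Finset 𝕜) (n : 𝕜 → ℤ) {z : 𝕜} (hz : z ∉ Z) :
    AnalyticAt 𝕜 (fun z ↦ ∏ σ ∈ Z, (z - σ) ^ n σ) z :=
  Finset.analyticAt_fun_prod _ fun _ hσ ↦ analyticAt_sub_zpow (ne_of_mem_of_not_mem hσ hz).symm _

theorem prod_sub_zpow_ne_zero (Z : Finset 𝕜) (n : 𝕜 → ℤ) {z : 𝕜} (hz : z ∉ Z) :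
    ∏ σ ∈ Z, (z - σ) ^ n σ ≠ 0 :=
  Finset.prod_ne_zero_iff.2 fun _ hσ ↦
    zpow_ne_zero _ (sub_ne_zero.2 (ne_of_mem_of_not_mem hσ hz).symm)

theorem exists_analyticOnNhd_eqOn_mul_prod_sub_zpow {f : 𝕜 → 𝕜} {U : Set 𝕜} {Z : Finset 𝕜}
    {n : 𝕜 → ℤ} (hZU : ↑Z ⊆ U) (hf : AnalyticOnNhd 𝕜 f (U \ Z))
    (hn : ∀ ρ ∈ Z, ∃ _ : MeromorphicAt f ρ, meromorphicOrderAt f ρ = n ρ) :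
    ∃ g : 𝕜 → 𝕜, AnalyticOnNhd 𝕜 g U ∧ (∀ ρ ∈ Z, g ρ ≠ 0) ∧
      EqOn f (fun z ↦ g z * ∏ ρ ∈ Z, (z - ρ) ^ n ρ) (U \ Z) := by
  set P : 𝕜 → 𝕜 := fun z ↦ ∏ ρ ∈ Z, (z - ρ) ^ n ρ
  -- `f / P` has order `0` on `Z`, so its normal form on `U` is analytic and zero-free there.
  set h : 𝕜 → 𝕜 := fun z ↦ f z / P z
  have hh_analytic : ∀ z ∈ U \ Z, AnalyticAt 𝕜 h z := fun z hz ↦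
    (hf z hz).div (analyticAt_prod_sub_zpow Z n hz.2) (prod_sub_zpow_ne_zero Z n hz.2)
  have hh_order : ∀ ρ ∈ Z, meromorphicOrderAt h ρ = 0 := by
    intro ρ hρ
    obtain ⟨hfρ, hordρ⟩ := hn ρ hρ
    rw [fun_meromorphicOrderAt_div hfρ (by fun_prop), hordρ,
      meromorphicOrderAt_prod_sub_zpow n hρ]
    exact_mod_cast sub_self (n ρ)
  have hh : MeromorphicOn h U := by
    intro z hz
    by_cases hzZ : z ∈ Z
    · exact (hn z hzZ).1.div (by fun_prop)
    · exact (hh_analytic z ⟨hz, hzZ⟩).meromorphicAt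
  have hg : MeromorphicNFOn (toMeromorphicNFOn h U) U := meromorphicNFOn_toMeromorphicNFOn h U
  have hgh : ∀ z ∈ U \ Z, toMeromorphicNFOn h U z = h z := fun z hz ↦ by
    rw [toMeromorphicNFOn_eq_toMeromorphicNFAt hh hz.1,
      toMeromorphicNFAt_eq_self.2 (hh_analytic z hz).meromorphicNFAt]
  refine ⟨toMeromorphicNFOn h U, fun z hz ↦ ?_, fun ρ hρ ↦ ?_, fun z hz ↦ ?_⟩
  · rw [← (hg hz).meromorphicOrderAt_nonneg_iff_analyticAt,
      meromorphicOrderAt_toMeromorphicNFOn hh hz]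
    by_cases hzZ : z ∈ Z
    · exact (hh_order z hzZ).symm.le
    · exact (hh_analytic z ⟨hz, hzZ⟩).meromorphicOrderAt_nonneg
  · rw [← (hg (hZU hρ)).meromorphicOrderAt_eq_zero_iff,
      meromorphicOrderAt_toMeromorphicNFOn hh (hZU hρ), hh_order ρ hρ]
  · dsimp only
    rw [hgh z hz]
    exact (div_mul_cancel₀ (f z) (prod_sub_zpow_ne_zero Z n hz.2)).symm

theorem logDeriv_mul_prod_sub_zpow {g : 𝕜 → 𝕜} (Z : Finset 𝕜) (n : 𝕜 → ℤ) {z : 𝕜} (hz : z ∉ Z)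
    (hg : DifferentiableAt 𝕜 g z) (hgz : g z ≠ 0) :
    logDeriv (fun w ↦ g w * ∏ ρ ∈ Z, (w - ρ) ^ n ρ) z = logDeriv g z + ∑ ρ ∈ Z, n ρ / (z - ρ) := by
  have hzρ : ∀ ρ ∈ Z, z ≠ ρ := fun ρ hρ ↦ (ne_of_mem_of_not_mem hρ hz).symm
  rw [logDeriv_mul z hgz (prod_sub_zpow_ne_zero Z n hz) hg
      (analyticAt_prod_sub_zpow Z n hz).differentiableAt,
    logDeriv_prod (f := fun ρ w ↦ (w - ρ) ^ n ρ)
      (fun ρ hρ ↦ zpow_ne_zero _ (sub_ne_zero.2 (hzρ ρ hρ)))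
      fun ρ hρ ↦ (analyticAt_sub_zpow (hzρ ρ hρ) _).differentiableAt]
  congr 1
  refine Finset.sum_congr rfl fun ρ _ ↦ ?_
  rw [logDeriv_fun_zpow (f := fun w ↦ w - ρ) (by fun_prop), logDeriv_apply, deriv_sub_const,
    deriv_id'', mul_one_div]

theorem sub_mul_sum_div_sub {Z : Finset 𝕜} (a : 𝕜 → 𝕜) (c : 𝕜) {z : 𝕜} (hz : z ∉ Z) :
    (z - c) * ∑ ρ ∈ Z, a ρ / (z - ρ) = ∑ ρ ∈ Z, a ρ + ∑ ρ ∈ Z, a ρ * (ρ - c) * (z - ρ)⁻¹ := by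
  rw [Finset.mul_sum, ← Finset.sum_add_distrib]
  refine Finset.sum_congr rfl fun ρ hρ ↦ ?_
  have : z - ρ ≠ 0 := sub_ne_zero.2 (ne_of_mem_of_not_mem hρ hz).symm
  field_simp
  ring

end Factorization

theorem circleIntegral_add_sum_mul_sub_inv {h : ℂ → ℂ} {c : ℂ} {R : ℝ} (hR : 0 ≤ R)
    (hh : DiffContOnCl ℂ h (ball c R)) {Z : Finset ℂ} (hZ : ↑Z ⊆ ball c R) (a : ℂ → ℂ) :
    (∮ z in C(c, R), (h z + ∑ ρ ∈ Z, a ρ * (z - ρ)⁻¹)) = 2 * π * I * ∑ ρ ∈ Z, a ρ := by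
  have hpole : ∀ ρ ∈ Z, CircleIntegrable (fun z ↦ a ρ * (z - ρ)⁻¹) c R := fun ρ hρ ↦ by
    refine (circleIntegrable_sub_inv_iff.2 (Or.inr ?_)).const_fun_smul
    rw [abs_of_nonneg hR]
    exact sphere_disjoint_ball.notMem_of_mem_right (hZ hρ)
  have hh_int : CircleIntegrable h c R :=
    (hh.continuousOn_ball.mono sphere_subset_closedBall).circleIntegrable hR
  rw [circleIntegral.integral_add hh_int (CircleIntegrable.fun_sum Z hpole),
    hh.circleIntegral_eq_zero hR, zero_add, circleIntegral.integral_fun_sum hpole, Finset.mul_sum]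
  refine Finset.sum_congr rfl fun ρ hρ ↦ ?_
  rw [circleIntegral.integral_const_mul, circleIntegral.integral_sub_inv_of_mem_ball (hZ hρ),
    mul_comm]

/-- Weighted argument principle: the contour integral of `(s - s₀) f'(s)/f(s)` over the
circle `∂B(s₀, u)` picks up the multiplicity-weighted sum of locations of zeros and poles. -/
theorem weighted_argument_principle
    (f : ℂ → ℂ) (U : Set ℂ) (hU : IsOpen U) (s₀ : ℂ) (u : ℝ) (hu : 0 < u)
    (hUB : closedBall s₀ u ⊆ U)
    (Z : Finset ℂ) (hZ : (Z : Set ℂ) ⊆ ball s₀ u)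
    (ord : ℂ → ℤ)
    (hf : AnalyticOnNhd ℂ f (U \ (Z : Set ℂ)))
    (hne : ∀ s ∈ closedBall s₀ u \ (Z : Set ℂ), f s ≠ 0)
    (hord : ∀ ρ ∈ Z, ∃ h : MeromorphicAt f ρ, meromorphicOrderAt f ρ = (ord ρ : WithTop ℤ)) :
    (2 * Real.pi * Complex.I)⁻¹ * (∮ s in C(s₀, u), (s - s₀) * (deriv f s / f s)) =
      ∑ ρ ∈ Z, (ord ρ : ℂ) * (ρ - s₀) := by
  obtain ⟨G, hG, hGZ, hfG⟩ := exists_analyticOnNhd_eqOn_mul_prod_sub_zpow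
    (hZ.trans (ball_subset_closedBall.trans hUB)) hf hord
  have hG_ne : ∀ z ∈ closedBall s₀ u, G z ≠ 0 := fun z hz ↦ by
    by_cases hzZ : z ∈ Z
    · exact hGZ z hzZ
    · exact left_ne_zero_of_mul (hfG ⟨hUB hz, hzZ⟩ ▸ hne z ⟨hz, hzZ⟩)
  have hZ_sphere : ∀ z ∈ sphere s₀ u, z ∉ Z := fun z hz hzZ ↦
    sphere_disjoint_ball.notMem_of_mem_left hz (hZ hzZ)
  have hlogDeriv : ∀ z ∈ sphere s₀ u,
      logDeriv f z = logDeriv G z + ∑ ρ ∈ Z, (ord ρ : ℂ) / (z - ρ) := fun z hz ↦ by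
    have hzU : z ∈ U \ Z := ⟨hUB (sphere_subset_closedBall hz), hZ_sphere z hz⟩
    have hf_eq : f =ᶠ[𝓝 z] fun w ↦ G w * ∏ ρ ∈ Z, (w - ρ) ^ ord ρ :=
      eventually_of_mem ((hU.sdiff Z.finite_toSet.isClosed).mem_nhds hzU) hfG
    rw [(logDeriv_congr_nhds hf_eq).eq_of_nhds]
    exact logDeriv_mul_prod_sub_zpow Z ord hzU.2 (hG z hzU.1).differentiableAt
      (hG_ne z (sphere_subset_closedBall hz))
  have hholo : DiffContOnCl ℂ (fun z ↦ (z - s₀) * logDeriv G z + ∑ ρ ∈ Z, (ord ρ : ℂ))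
      (ball s₀ u) := by
    refine DifferentiableOn.diffContOnCl_ball ?_ subset_rfl
    have hlogDerivG : DifferentiableOn ℂ (logDeriv G) (closedBall s₀ u) :=
      (hG.deriv.differentiableOn.mono hUB).div (hG.differentiableOn.mono hUB) hG_ne
    exact ((differentiableOn_id.sub_const s₀).mul hlogDerivG).add_const _
  rw [circleIntegral.integral_congr hu.le fun z hz ↦ by
      rw [← logDeriv_apply, hlogDeriv z hz, mul_add, sub_mul_sum_div_sub _ _ (hZ_sphere z hz),
        ← add_assoc],
    circleIntegral_add_sum_mul_sub_inv hu.le hholo hZ, ← mul_assoc,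
    inv_mul_cancel₀ two_pi_I_ne_zero, one_mul]
end

section
/- Reflection symmetry of a weighted log-derivative integral: let f be holomorphic and nonvanishing on a neighborhood of the closed disc B̄(s_j, u) with center s_j on the line Re(s)=1/2, and suppose f(conj s) = conj(f(s)) and f(1-s) = 1/f(s) on this neighborhood. Let Λ be the left half of ∂B(s_j,u) (the arc with Re(s) ≤ 1/2) traversed counterclockwise together with the vertical diameter, as in the contour s_j + u e^{it}, π/2 ≤ t ≤ 3π/2, followed by s_j + it, -u ≤ t ≤ u. Then the conjugate of ∫_Λ (s - s_j) f'(s)/f(s) ds equals minus the integral of (s - s_j) f'(s)/f(s) over the image of Λ under s ↦ 1 - conj(s) traversed with reversed orientation, and the sum of the two contour integrals equals ∮_{∂B(s_j,u)} (s - s_j) f'(s)/f(s) ds. -/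
/-!
Write `ρ s = 1 - conj s`, the reflection in `Re s = 1/2`; it maps the disc onto itself, fixes the
diameter pointwise and reverses orientation. The reality condition gives
`(f'/f)(conj s) = conj ((f'/f) s)`, and differentiating `f s * f (1 - s) = 1` gives
`(f'/f)(1 - s) = (f'/f) s`; together with `conj s_j = 1 - s_j` this yields
`conj (g s) = -g (ρ s)`. Hence conjugating the integral over `Λ` produces the integral over `ρ Λ`,
with the diameter term unchanged. In the sum, the diameter terms cancel, and the left arc together
with `ρ` of it (the right arc) is the whole circle.
-/

open Complex Metric intervalIntegral Real
open ComplexConjugate Filter Topology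

section LogDeriv

variable {f : ℂ → ℂ} {s : ℂ}

theorem logDeriv_conj_of_eventually (h : ∀ᶠ w in 𝓝 s, f (conj w) = conj (f w)) :
    logDeriv f (conj s) = conj (logDeriv f s) := by
  have hf : f =ᶠ[𝓝 (conj s)] conj ∘ f ∘ conj := by
    have hs : Tendsto conj (𝓝 (conj s)) (𝓝 s) := by
      simpa using continuous_conj.tendsto (conj s)
    filter_upwards [hs.eventually h] with v hv
    rwa [Complex.conj_conj] at hv
  rw [(logDeriv_congr_nhds hf).eq_of_nhds, logDeriv_apply, deriv_conj_conj]
  simp [logDeriv_apply]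

theorem logDeriv_one_sub_of_eventually (hf : DifferentiableAt ℂ f s)
    (h : ∀ᶠ x in 𝓝 s, f x * f (1 - x) = 1) : logDeriv f (1 - s) = logDeriv f s := by
  have hinv : (fun x => f (1 - x)) =ᶠ[𝓝 s] (f · ^ (-1 : ℤ)) := by
    filter_upwards [h] with x hx
    rw [zpow_neg_one, eq_inv_of_mul_eq_one_right hx]
  have := (logDeriv_congr_nhds hinv).eq_of_nhds
  rw [logDeriv_fun_zpow hf, logDeriv_apply, deriv_comp_const_sub] at this
  rw [logDeriv_apply]
  linear_combination -this

end LogDeriv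

theorem one_sub_conj_mem_closedBall {c s : ℂ} {r : ℝ} (hc : conj c = 1 - c)
    (hs : s ∈ closedBall c r) : 1 - conj s ∈ closedBall c r := by
  rw [mem_closedBall, dist_eq_norm, show 1 - conj s - c = conj (c - s) by simp [hc]; ring,
    RCLike.norm_conj, ← dist_eq_norm, dist_comm]
  exact hs

theorem conj_sub_mul_logDeriv {f : ℂ → ℂ} {c s : ℂ} (hc : conj c = 1 - c)
    (hreal : ∀ᶠ w in 𝓝 s, f (conj w) = conj (f w)) (hf : DifferentiableAt ℂ f (1 - conj s))
    (hfe : ∀ᶠ x in 𝓝 (1 - conj s), f x * f (1 - x) = 1) :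
    conj ((s - c) * logDeriv f s) = -((1 - conj s - c) * logDeriv f (1 - conj s)) := by
  have hsym := logDeriv_one_sub_of_eventually hf hfe
  rw [sub_sub_cancel] at hsym
  rw [map_mul, map_sub, hc, ← logDeriv_conj_of_eventually hreal, hsym]
  ring

theorem conj_intervalIntegral (f : ℝ → ℂ) (a b : ℝ) :
    conj (∫ t in a..b, f t) = ∫ t in a..b, conj (f t) := by
  simp only [intervalIntegral, map_sub, ← integral_conj]

section CircleMap

variable (c : ℂ) (R θ : ℝ)

theorem circleMap_pi_sub : circleMap c R (π - θ) = c - R * exp (-(θ * I)) := by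
  simp only [circleMap, ofReal_sub, sub_mul, Complex.exp_sub, exp_pi_mul_I, Complex.exp_neg]
  ring

theorem deriv_circleMap_pi_sub :
    deriv (circleMap c R) (π - θ) = -(R * I * exp (-(θ * I))) := by
  rw [deriv_circleMap, circleMap_pi_sub, zero_sub]
  ring

theorem one_sub_conj_circleMap {c : ℂ} (hc : conj c = 1 - c) :
    1 - conj (circleMap c R θ) = circleMap c R (π - θ) := by
  rw [conj_circleMap, hc, circleMap_pi_sub, circleMap, ofReal_neg, neg_mul]
  ring

end CircleMap

theorem circleIntegral_eq_integral_add_two_pi {E : Type*} [NormedAddCommGroup E]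
    [NormedSpace ℂ E] (g : ℂ → E) (c : ℂ) (R a : ℝ) :
    (∮ z in C(c, R), g z) = ∫ θ in a..a + 2 * π, deriv (circleMap c R) θ • g (circleMap c R θ) := by
  have hper : Function.Periodic
      (fun θ => deriv (circleMap c R) θ • g (circleMap c R θ)) (2 * π) := fun θ => by
    simp only [deriv_circleMap, periodic_circleMap c R θ, periodic_circleMap 0 R θ]
  rw [hper.intervalIntegral_add_eq a 0, zero_add, circleIntegral]

theorem circleIntegral_eq_integral_add_integral_pi_sub {E : Type*} [NormedAddCommGroup E]
    [NormedSpace ℂ E] {g : ℂ → E} {c : ℂ} {R : ℝ} (hg : ContinuousOn g (sphere c |R|)) :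
    (∮ z in C(c, R), g z) =
      (∫ θ in π / 2..3 * π / 2, deriv (circleMap c R) θ • g (circleMap c R θ)) +
        ∫ θ in π / 2..3 * π / 2, deriv (circleMap c R) (π - θ) • g (circleMap c R (π - θ)) := by
  have hcont : Continuous (fun θ => deriv (circleMap c R) θ • g (circleMap c R θ)) := by
    simp only [deriv_circleMap]
    exact ((continuous_circleMap 0 R).mul continuous_const).smul
      (hg.comp_continuous (continuous_circleMap c R) (circleMap_mem_sphere' c R))
  rw [circleIntegral_eq_integral_add_two_pi g c R (-(π / 2)),
    integral_comp_sub_left (fun θ => deriv (circleMap c R) θ • g (circleMap c R θ)) π,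
    show π - 3 * π / 2 = -(π / 2) by ring, show π - π / 2 = π / 2 by ring,
    show -(π / 2) + 2 * π = 3 * π / 2 by ring, add_comm,
    integral_add_adjacent_intervals (hcont.intervalIntegrable _ _) (hcont.intervalIntegrable _ _)]

noncomputable section HalfCircleContour

variable (g : ℂ → ℂ) (c : ℂ) (R : ℝ)

def leftArcIntegral : ℂ :=
  ∫ θ in π / 2..3 * π / 2, g (c + R * exp (θ * I)) * (R * I * exp (θ * I))

def diameterIntegral : ℂ :=
  ∫ t in -R..R, g (c + t * I) * I

/-- The image of the left arc under `s ↦ 1 - conj s`, parametrised by `θ ↦ c - R e^{-iθ}`. -/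
def reflectedArcIntegral : ℂ :=
  ∫ θ in π / 2..3 * π / 2, g (c - R * exp (-(θ * I))) * (R * I * exp (-(θ * I)))

variable {g c R}

theorem conj_leftArcIntegral (hc : conj c = 1 - c)
    (hg : ∀ s ∈ sphere c |R|, conj (g s) = -g (1 - conj s)) :
    conj (leftArcIntegral g c R) = reflectedArcIntegral g c R := by
  rw [leftArcIntegral, reflectedArcIntegral, conj_intervalIntegral]
  refine integral_congr fun θ _ => ?_
  have hθ := hg _ (circleMap_mem_sphere' c R θ)
  rw [one_sub_conj_circleMap R θ hc, circleMap_pi_sub] at hθ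
  rw [map_mul, show c + R * exp (θ * I) = circleMap c R θ from rfl, hθ, map_mul, map_mul,
    conj_ofReal, conj_I, ← exp_conj, map_mul, conj_ofReal, conj_I]
  ring_nf

theorem conj_diameterIntegral (hc : conj c = 1 - c)
    (hg : ∀ s ∈ closedBall c |R|, conj (g s) = -g (1 - conj s)) :
    conj (diameterIntegral g c R) = diameterIntegral g c R := by
  rw [diameterIntegral, conj_intervalIntegral]
  refine integral_congr fun t ht => ?_
  have hmem : c + t * I ∈ closedBall c |R| := by
    have htR : |t| ≤ |R| := by
      rcases Set.mem_uIcc.1 ht with h | h <;>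
        exact abs_le.2 ⟨by linarith [le_abs_self R, neg_abs_le R],
          by linarith [le_abs_self R, neg_le_abs R]⟩
    simpa [dist_eq_norm] using htR
  have hfix : 1 - conj (c + t * I) = c + t * I := by
    rw [map_add, hc, map_mul, conj_ofReal, conj_I]
    ring
  rw [map_mul, hg _ hmem, hfix, conj_I]
  ring

theorem leftArcIntegral_sub_reflectedArcIntegral (hg : ContinuousOn g (sphere c |R|)) :
    leftArcIntegral g c R - reflectedArcIntegral g c R = ∮ z in C(c, R), g z := by
  rw [circleIntegral_eq_integral_add_integral_pi_sub hg, sub_eq_add_neg, leftArcIntegral,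
    reflectedArcIntegral, ← integral_neg]
  congr 1 <;> refine integral_congr fun θ _ => ?_
  · simp only [deriv_circleMap, circleMap, zero_add, smul_eq_mul]
    ring
  · simp only [deriv_circleMap_pi_sub, circleMap_pi_sub, smul_eq_mul]
    ring

end HalfCircleContour

theorem reflection_symmetry_log_derivative_integral_general
    (t_j : ℝ) (s_j : ℂ) (hsj : s_j = 1/2 + t_j * Complex.I)
    (u : ℝ) (hu : 0 < u)
    (U : Set ℂ) (hU : IsOpen U) (hUB : closedBall s_j u ⊆ U)
    (f : ℂ → ℂ) (hf : DifferentiableOn ℂ f U)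
    (hreal : ∀ s ∈ U, f ((starRingEnd ℂ) s) = (starRingEnd ℂ) (f s))
    (hfe : ∀ s ∈ U, f s * f (1 - s) = 1)
    (g : ℂ → ℂ) (hg : ∀ s : ℂ, g s = (s - s_j) * (deriv f s / f s))
    -- the integral over Λ
    (LambdaInt : ℂ)
    (hLambda : LambdaInt =
      (∫ t in (Real.pi/2)..(3*Real.pi/2),
          g (s_j + u * Complex.exp (t * Complex.I)) * (u * Complex.I * Complex.exp (t * Complex.I)))
        + ∫ t in (-u)..u, g (s_j + t * Complex.I) * Complex.I)
    -- the integral over the image of Λ under s ↦ 1 - conj s, traversed with REVERSED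
    -- orientation (the forward image of the arc is `t ↦ s_j - u e^{-it}` and of the
    -- diameter is `t ↦ s_j + it`; reversal negates the forward integral)
    (ReflRevInt : ℂ)
    (hRefl : ReflRevInt = -(
      (∫ t in (Real.pi/2)..(3*Real.pi/2),
          g (s_j - u * Complex.exp (-(t * Complex.I))) * (u * Complex.I * Complex.exp (-(t * Complex.I))))
        + ∫ t in (-u)..u, g (s_j + t * Complex.I) * Complex.I)) :
    (starRingEnd ℂ) LambdaInt = -ReflRevInt ∧
    LambdaInt + ReflRevInt = ∮ s in C(s_j, u), g s := by
  have hc : conj s_j = 1 - s_j := by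
    rw [hsj, map_add, map_mul, conj_ofReal, conj_I, map_div₀, map_one, map_ofNat]
    ring
  rw [← abs_of_pos hu] at hUB
  have hreflect : ∀ s ∈ closedBall s_j |u|, conj (g s) = -g (1 - conj s) := fun s hs => by
    have hs' : 1 - conj s ∈ U := hUB (one_sub_conj_mem_closedBall hc hs)
    rw [hg, hg]
    exact conj_sub_mul_logDeriv hc (eventually_of_mem (hU.mem_nhds (hUB hs)) hreal)
      (hf.differentiableAt (hU.mem_nhds hs')) (eventually_of_mem (hU.mem_nhds hs') hfe)
  have hcont : ContinuousOn g U := by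
    rw [funext hg]
    exact (continuousOn_id.sub continuousOn_const).mul ((hf.deriv hU).continuousOn.div
      hf.continuousOn fun s hs => left_ne_zero_of_mul_eq_one (hfe s hs))
  change LambdaInt = leftArcIntegral g s_j u + diameterIntegral g s_j u at hLambda
  change ReflRevInt = -(reflectedArcIntegral g s_j u + diameterIntegral g s_j u) at hRefl
  rw [hLambda, hRefl, map_add,
    conj_leftArcIntegral hc fun s hs => hreflect s (sphere_subset_closedBall hs),
    conj_diameterIntegral hc hreflect,
    ← leftArcIntegral_sub_reflectedArcIntegral (hcont.mono (sphere_subset_closedBall.trans hUB))]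
  constructor <;> ring

/-- Reflection symmetry of the weighted log-derivative integral over the half-circle
contour `Λ` (left semicircle `s_j + u e^{it}`, `π/2 ≤ t ≤ 3π/2`, followed by the vertical
diameter `s_j + it`, `-u ≤ t ≤ u`).  The conjugate of `∫_Λ (s-s_j) f'(s)/f(s) ds` equals
minus the integral over the image of `Λ` under `s ↦ 1 - conj s` with reversed orientation,
and the sum of the two contour integrals is the full circle integral. -/
theorem reflection_symmetry_log_derivative_integral
    (t_j : ℝ) (s_j : ℂ) (hsj : s_j = 1/2 + t_j * Complex.I)
    (u : ℝ) (hu : 0 < u)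
    (U : Set ℂ) (hU : IsOpen U) (hUB : closedBall s_j u ⊆ U)
    (hUconj : ∀ s ∈ U, (starRingEnd ℂ) s ∈ U) (hUsym : ∀ s ∈ U, (1 - s) ∈ U)
    (f : ℂ → ℂ) (hf : DifferentiableOn ℂ f U) (hne : ∀ s ∈ U, f s ≠ 0)
    (hreal : ∀ s ∈ U, f ((starRingEnd ℂ) s) = (starRingEnd ℂ) (f s))
    (hfe : ∀ s ∈ U, f s * f (1 - s) = 1)
    (g : ℂ → ℂ) (hg : ∀ s : ℂ, g s = (s - s_j) * (deriv f s / f s))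
    -- the integral over Λ
    (LambdaInt : ℂ)
    (hLambda : LambdaInt =
      (∫ t in (Real.pi/2)..(3*Real.pi/2),
          g (s_j + u * Complex.exp (t * Complex.I)) * (u * Complex.I * Complex.exp (t * Complex.I)))
        + ∫ t in (-u)..u, g (s_j + t * Complex.I) * Complex.I)
    -- the integral over the image of Λ under s ↦ 1 - conj s, traversed with REVERSED
    -- orientation (the forward image of the arc is `t ↦ s_j - u e^{-it}` and of the
    -- diameter is `t ↦ s_j + it`; reversal negates the forward integral)
    (ReflRevInt : ℂ)
    (hRefl : ReflRevInt = -(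
      (∫ t in (Real.pi/2)..(3*Real.pi/2),
          g (s_j - u * Complex.exp (-(t * Complex.I))) * (u * Complex.I * Complex.exp (-(t * Complex.I))))
        + ∫ t in (-u)..u, g (s_j + t * Complex.I) * Complex.I)) :
    (starRingEnd ℂ) LambdaInt = -ReflRevInt ∧
    LambdaInt + ReflRevInt = ∮ s in C(s_j, u), g s :=
  reflection_symmetry_log_derivative_integral_general t_j s_j hsj u hu U hU hUB f hf hreal hfe g hg
    LambdaInt hLambda ReflRevInt hRefl
end

section
/- If m : Γ → ℂ is an additive homomorphism on a group Γ acting on a set H, and u : H → ℂ is Γ-invariant, then for a function c : H → ℂ satisfying c(γz) = c(z) + m(γ) for all γ, z, the function z ↦ c(z)^n · u(z) belongs to Aⁿ_Γ (n-th order automorphic functions) for every n ≥ 0. -/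
/-- The space of `n`-th order automorphic functions: `A⁰` consists of the `Γ`-invariant
functions, and `Aⁿ` of the functions `f` with `f(γ·) - f ∈ A^{n-1}` for all `γ`. -/
def HigherOrderAut (Γ : Type*) [Group Γ] {H : Type*} [MulAction Γ H] :
    ℕ → Set (H → ℂ)
  | 0 => {f | ∀ (γ : Γ) (z : H), f (γ • z) = f z}
  | (n + 1) => {f | ∀ γ : Γ, (fun z => f (γ • z) - f z) ∈ HigherOrderAut Γ n}

/-!
Writing `Δ_γ f = f(γ·) - f`, the spaces `Aⁿ` form an increasing chain of linear subspaces with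
`Aⁿ⁺¹ = ⋂_γ Δ_γ⁻¹(Aⁿ)`. By the cocycle property and the binomial theorem,
`Δ_γ (cᵏ u) = ∑_{i<k} (k choose i) m(γ)^{k-i} cⁱ u`, a linear combination of functions `cⁱ u`
with `i < k`; by strong induction these lie in `Aⁱ ⊆ A^{k-1}`, so `cᵏ u ∈ Aᵏ`.
-/

open Finset

theorem add_pow_sub_pow_eq_sum {R : Type*} [CommRing R] (x a : R) (k : ℕ) :
    (x + a) ^ k - x ^ k = ∑ i ∈ range k, x ^ i * a ^ (k - i) * k.choose i := by
  rw [add_pow, sum_range_succ]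
  simp

section HigherOrderAut

variable {Γ : Type*} [Group Γ] {H : Type*} [MulAction Γ H]

def actionDifference (γ : Γ) : (H → ℂ) →ₗ[ℂ] (H → ℂ) :=
  LinearMap.funLeft ℂ ℂ (γ • ·) - LinearMap.id

theorem actionDifference_apply (γ : Γ) (f : H → ℂ) (z : H) :
    actionDifference γ f z = f (γ • z) - f z :=
  rfl

variable (Γ H) in
def higherOrderAutSubmodule : ℕ → Submodule ℂ (H → ℂ)
  | 0 => ⨅ γ : Γ, LinearMap.ker (actionDifference γ)
  | n + 1 => ⨅ γ : Γ, (higherOrderAutSubmodule n).comap (actionDifference γ)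

theorem mem_higherOrderAutSubmodule {n : ℕ} {f : H → ℂ} :
    f ∈ higherOrderAutSubmodule Γ H n ↔ f ∈ HigherOrderAut Γ n := by
  induction n generalizing f with
  | zero =>
    simp only [higherOrderAutSubmodule, Submodule.mem_iInf, LinearMap.mem_ker, funext_iff,
      actionDifference_apply, Pi.zero_apply, sub_eq_zero]
    rfl
  | succ n ih =>
    simp only [higherOrderAutSubmodule, Submodule.mem_iInf, Submodule.mem_comap, ih]
    rfl

theorem mem_higherOrderAut_succ_iff {n : ℕ} {f : H → ℂ} :
    f ∈ HigherOrderAut Γ (n + 1) ↔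
      ∀ γ : Γ, actionDifference γ f ∈ higherOrderAutSubmodule Γ H n := by
  simp only [mem_higherOrderAutSubmodule]
  rfl

theorem higherOrderAutSubmodule_monotone : Monotone (higherOrderAutSubmodule Γ H) := by
  refine monotone_nat_of_le_succ fun n => ?_
  induction n with
  | zero =>
    intro f hf
    simp only [higherOrderAutSubmodule, Submodule.mem_iInf, LinearMap.mem_ker,
      Submodule.mem_comap] at hf ⊢
    intro γ γ'
    rw [hf γ, map_zero]
  | succ n ih =>
    exact iInf_mono fun γ => Submodule.comap_mono ih

theorem actionDifference_cocycle_pow_mul_invariant {m : Γ → ℂ} {u c : H → ℂ}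
    (hu : ∀ (γ : Γ) (z : H), u (γ • z) = u z) (hc : ∀ (γ : Γ) (z : H), c (γ • z) = c z + m γ)
    (γ : Γ) (k : ℕ) :
    actionDifference γ (fun z => c z ^ k * u z) =
      ∑ i ∈ range k, (m γ ^ (k - i) * k.choose i) • fun z => c z ^ i * u z := by
  ext z
  simp only [actionDifference_apply, hc, hu, ← sub_mul, add_pow_sub_pow_eq_sum, sum_mul,
    Finset.sum_apply, Pi.smul_apply, smul_eq_mul]
  exact sum_congr rfl fun i _ => by ring

end HigherOrderAut

theorem cocycle_pow_mul_invariant_mem_higherOrderAut_general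
    {Γ : Type*} [Group Γ] {H : Type*} [MulAction Γ H]
    (m : Γ → ℂ)
    (u : H → ℂ) (hu : ∀ (γ : Γ) (z : H), u (γ • z) = u z)
    (c : H → ℂ) (hc : ∀ (γ : Γ) (z : H), c (γ • z) = c z + m γ) :
    ∀ n : ℕ, (fun z => (c z) ^ n * u z) ∈ HigherOrderAut Γ n := by
  intro n
  induction n using Nat.strong_induction_on with
  | _ n ih =>
    cases n with
    | zero => exact fun γ z => by simp only [pow_zero, one_mul, hu]
    | succ n =>
      refine mem_higherOrderAut_succ_iff.mpr fun γ => ?_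
      rw [actionDifference_cocycle_pow_mul_invariant hu hc]
      refine Submodule.sum_mem _ fun i hi => Submodule.smul_mem _ _ ?_
      have hin : i < n + 1 := mem_range.mp hi
      exact higherOrderAutSubmodule_monotone (Nat.lt_succ_iff.mp hin)
        (mem_higherOrderAutSubmodule.mpr (ih i hin))

/-- If `c` satisfies the cocycle property `c(γz) = c(z) + m(γ)` for an additive
homomorphism `m`, and `u` is `Γ`-invariant, then `z ↦ c(z)ⁿ u(z)` is an `n`-th order
automorphic function. -/
theorem cocycle_pow_mul_invariant_mem_higherOrderAut
    {Γ : Type*} [Group Γ] {H : Type*} [MulAction Γ H]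
    (m : Γ → ℂ) (hm : ∀ γ₁ γ₂ : Γ, m (γ₁ * γ₂) = m γ₁ + m γ₂)
    (u : H → ℂ) (hu : ∀ (γ : Γ) (z : H), u (γ • z) = u z)
    (c : H → ℂ) (hc : ∀ (γ : Γ) (z : H), c (γ • z) = c z + m γ) :
    ∀ n : ℕ, (fun z => (c z) ^ n * u z) ∈ HigherOrderAut Γ n :=
  cocycle_pow_mul_invariant_mem_higherOrderAut_general m u hu c hc
end
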